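/- arXiv:2009.06904 — 12 statements merged into one kernel-verified Lean document; each statement's English description precedes it below -/
import Mathlib

section
/- Let M be a J-trivial monoid (i.e., for all a,b in M, if MaM = MbM as two-sided ideals then a = b) such that every element x of M satisfies x^n = x^{n+1} for some fixed n ≥ 1. Then for all a, b in M, (ab)^n = (ba)^n. -/
private lemma pow_stable {M : Type*} [Monoid M] {n : ℕ}
    (hpow : ∀ x : M, x ^ n = x ^ (n + 1)) (x : M) :
    ∀ m, n ≤ m → x ^ m = x ^ n := by
  intro m hm
  induction m with
  | zero => rw [Nat.le_zero.mp hm]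
  | succ k ih =>
    rcases Nat.lt_or_ge n (k+1) with h | h
    · have hk : n ≤ k := Nat.lt_succ_iff.mp h
      have : x ^ (k + 1) = x ^ k * x := pow_succ x k
      rw [this, ih hk, ← pow_succ, ← hpow]
    · have : n = k + 1 := le_antisymm hm h
      rw [this]

private lemma myConjPow {M : Type*} [Monoid M] (a b : M) :
    ∀ k, (a * b) ^ (k + 1) = a * (b * a) ^ k * b := by
  intro k
  induction k with
  | zero => simp
  | succ k ih =>
    calc (a * b) ^ (k + 2) = (a * b) * (a * b) ^ (k + 1) := by rw [pow_succ']
    _ = (a * b) * (a * (b * a) ^ k * b) := by rw [ih]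
    _ = a * ((b * a) * (b * a) ^ k) * b := by simp [mul_assoc]
    _ = a * (b * a) ^ (k + 1) * b := by rw [pow_succ']

private lemma key {M : Type*} [Monoid M] {n : ℕ} (hn : 1 ≤ n)
    (hpow : ∀ x : M, x ^ n = x ^ (n + 1)) (a b : M) :
    ∃ u v : M, u * (b * a) ^ n * v = (a * b) ^ n := by
  refine ⟨a * (b * a) ^ (n - 1), b, ?_⟩
  have h1 : (a * b) ^ n = (a * b) ^ (2 * n) :=
    (pow_stable hpow (a * b) (2 * n) (by omega)).symm
  have h2 : 2 * n = (2 * n - 1) + 1 := by omega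
  have h3 : 2 * n - 1 = (n - 1) + n := by omega
  rw [h1, h2, myConjPow, h3, pow_add, ← mul_assoc]

/-- Let `M` be a `J`-trivial monoid (if two elements generate the same two-sided
ideal then they are equal) satisfying `x^n = x^(n+1)` for a fixed `n ≥ 1`.
Then `(ab)^n = (ba)^n` for all `a b`. -/
theorem stmt_0 {M : Type*} [Monoid M] (n : ℕ) (hn : 1 ≤ n)
    (hJ : ∀ a b : M,
      {z : M | ∃ u v : M, u * a * v = z} = {z : M | ∃ u v : M, u * b * v = z} → a = b)
    (hpow : ∀ x : M, x ^ n = x ^ (n + 1)) :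
    ∀ a b : M, (a * b) ^ n = (b * a) ^ n := by
  intro a b
  apply hJ
  ext z
  constructor
  · rintro ⟨u, v, rfl⟩
    obtain ⟨p, q, hpq⟩ := key hn hpow a b
    exact ⟨u * p, q * v, by rw [← hpq]; simp [mul_assoc]⟩
  · rintro ⟨u, v, rfl⟩
    obtain ⟨p, q, hpq⟩ := key hn hpow b a
    exact ⟨u * p, q * v, by rw [← hpq]; simp [mul_assoc]⟩
end

section
/- Let M be a finite J-trivial monoid. Then there exists n ≥ 1 such that M satisfies the identities x^n = x^{n+1} and (xy)^n = (yx)^n. -/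
private lemma mul_pow_mul_aux {M : Type*} [Monoid M] (x y : M) (n : ℕ) :
    (x * y) ^ (n + 1) = x * (y * x) ^ n * y := by
  induction n with
  | zero => simp [mul_assoc]
  | succ k ih =>
    rw [pow_succ, ih, pow_succ]
    simp [mul_assoc]

/-- A finite `J`-trivial monoid satisfies `x^n = x^(n+1)` and `(xy)^n = (yx)^n`
for some `n ≥ 1`. -/
theorem stmt_1 {M : Type*} [Monoid M] [Finite M]
    (hJ : ∀ a b : M,
      {z : M | ∃ u v : M, u * a * v = z} = {z : M | ∃ u v : M, u * b * v = z} → a = b) :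
    ∃ n : ℕ, 1 ≤ n ∧ (∀ x : M, x ^ n = x ^ (n + 1)) ∧
      ∀ x y : M, (x * y) ^ n = (y * x) ^ n := by
  have key : ∀ a b : M, (∃ u v : M, u * b * v = a) → (∃ u v : M, u * a * v = b) → a = b := by
    rintro a b ⟨u, v, huv⟩ ⟨u', v', huv'⟩
    apply hJ
    ext z
    constructor
    · rintro ⟨p, q, rfl⟩
      exact ⟨p * u, v * q, by rw [← huv]; simp [mul_assoc]⟩
    · rintro ⟨p, q, rfl⟩
      exact ⟨p * u', v' * q, by rw [← huv']; simp [mul_assoc]⟩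
  set n := Nat.card M with hn
  -- each element has some stabilization index ≤ n
  have step : ∀ x : M, ∃ i : ℕ, i ≤ n ∧ x ^ i = x ^ (i + 1) := by
    intro x
    have : Fintype M := Fintype.ofFinite M
    obtain ⟨i, j, hne, hij⟩ :=
      Fintype.exists_ne_map_eq_of_card_lt (fun k : Fin (n + 1) => x ^ ((k : ℕ) + 1))
        (by simp [hn, Nat.card_eq_fintype_card])
    rcases Nat.lt_or_ge (i : ℕ) (j : ℕ) with hlt | hge
    case _ =>
      refine ⟨(i : ℕ) + 1, by omega, ?_⟩
      apply key
      · refine ⟨1, x ^ ((j : ℕ) - (i : ℕ) - 1), ?_⟩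
        rw [one_mul, ← pow_add]
        have h : (i : ℕ) + 1 + 1 + ((j : ℕ) - (i : ℕ) - 1) = (j : ℕ) + 1 := by omega
        rw [h, ← hij]
      · exact ⟨1, x, by rw [one_mul, ← pow_succ]⟩
    case _ =>
      have hlt : (j : ℕ) < (i : ℕ) := lt_of_le_of_ne hge (by
        intro h; exact hne (Fin.ext h.symm))
      refine ⟨(j : ℕ) + 1, by omega, ?_⟩
      apply key
      · refine ⟨1, x ^ ((i : ℕ) - (j : ℕ) - 1), ?_⟩
        rw [one_mul, ← pow_add]
        have h : (j : ℕ) + 1 + 1 + ((i : ℕ) - (j : ℕ) - 1) = (i : ℕ) + 1 := by omega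
        rw [h, hij]
      · exact ⟨1, x, by rw [one_mul, ← pow_succ]⟩
  have stab : ∀ x : M, ∀ i : ℕ, x ^ i = x ^ (i + 1) → ∀ m, i ≤ m → x ^ m = x ^ (m + 1) := by
    intro x i hi m hm
    induction m with
    | zero => simpa [Nat.le_zero.mp hm] using hi
    | succ k ih =>
      rcases Nat.lt_or_ge i (k + 1) with h | h
      · have hk := ih (by omega)
        rw [pow_succ, hk, ← pow_succ]
      · have : i = k + 1 := by omega
        rwa [this] at hi
  have h1 : ∀ x : M, x ^ n = x ^ (n + 1) := by
    intro x
    obtain ⟨i, hi, hxi⟩ := step x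
    exact stab x i hxi n hi
  have hn1 : 1 ≤ n := Nat.one_le_iff_ne_zero.mpr (Nat.card_ne_zero.mpr ⟨⟨1⟩, ‹Finite M›⟩)
  refine ⟨n, hn1, h1, ?_⟩
  intro x y
  apply key
  · refine ⟨x, y, ?_⟩
    rw [← mul_pow_mul_aux, ← h1]
  · refine ⟨y, x, ?_⟩
    rw [← mul_pow_mul_aux, ← h1]
end

section
/- Any monoid satisfying the identity xtysyx ≈ xtysxyx also satisfies the identity xtysxy ≈ xtysyxy. -/
/-- Any monoid satisfying `xtysyx ≈ xtysxyx` also satisfies `xtysxy ≈ xtysyxy`. -/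
theorem stmt_4 {M : Type*} [Monoid M]
    (h : ∀ x t y s : M, x * t * y * s * y * x = x * t * y * s * x * y * x) :
    ∀ x t y s : M, x * t * y * s * x * y = x * t * y * s * y * x * y := by
  intro x t y s
  have e1 : x * t * y * s * x = x * t * y * s * x * x := by
    have := h x (t * y * s) 1 1
    simpa [mul_assoc] using this
  have e2 : y * s * x * x * y = y * s * x * y * x * y := by
    simpa using h y s x 1
  have e3 : x * t * y * s * y * x = x * t * y * s * x * y * x := h x t y s
  calc x * t * y * s * x * y
      = x * t * y * s * x * x * y := by conv_lhs => rw [e1]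
    _ = x * t * (y * s * x * x * y) := by simp only [mul_assoc]
    _ = x * t * (y * s * x * y * x * y) := by rw [e2]
    _ = x * t * y * s * x * y * x * y := by simp only [mul_assoc]
    _ = x * t * y * s * y * x * y := by rw [← e3]
end

section
/- Any monoid satisfying the identities xtx ≈ xtx² and x²t ≈ x²tx satisfies xtxs ≈ xtxsx, and conversely any monoid satisfying xtxs ≈ xtxsx satisfies both xtx ≈ xtx² and x²t ≈ x²tx. -/
/-- The identity `xtxs ≈ xtxsx` is equivalent to `{xtx ≈ xtx², x²t ≈ x²tx}`. -/
theorem stmt_5 {M : Type*} [Monoid M] :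
    ((∀ x t : M, x * t * x = x * t * (x * x)) ∧ (∀ x t : M, x * x * t = x * x * t * x))
      ↔ (∀ x t s : M, x * t * x * s = x * t * x * s * x) := by
  constructor
  · rintro ⟨h1, h2⟩ x t s
    calc x * t * x * s = x * t * (x * x) * s := by rw [← h1]
      _ = x * t * (x * x * s) := by rw [mul_assoc]
      _ = x * t * (x * x * s * x) := by rw [← h2]
      _ = x * t * (x * x) * s * x := by simp [mul_assoc]
      _ = x * t * x * s * x := by rw [← h1]
  · intro h
    constructor
    · intro x t
      have := h x t 1
      simpa [mul_assoc] using this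
    · intro x t
      have := h x 1 t
      simpa using this
end

section
/- Any monoid satisfying the identities xtx ≈ x²tx and xy²tx ≈ xy²xtx also satisfies xysytx ≈ xyxsytx. -/
/-- Any monoid satisfying `xtx ≈ x²tx` and `xy²tx ≈ xy²xtx` also satisfies
`xysytx ≈ xyxsytx`. -/
theorem stmt_7 {M : Type*} [Monoid M]
    (h1 : ∀ x t : M, x * t * x = x * x * t * x)
    (h2 : ∀ x y t : M, x * (y * y) * t * x = x * (y * y) * x * t * x) :
    ∀ x y s t : M, x * y * s * y * t * x = x * y * x * s * y * t * x := by
  intro x y s t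
  have e1 : y * (s * (y * (t * x))) = y * (y * (s * (y * (t * x)))) := by
    have := congrArg (· * (t * x)) (h1 y s)
    simpa [mul_assoc] using this
  have e2 : y * (x * (s * (y * (t * x)))) = y * (y * (x * (s * (y * (t * x))))) := by
    have := congrArg (· * (t * x)) (h1 y (x * s))
    simpa [mul_assoc] using this
  have e3 : x * (y * (y * (s * (y * (t * x))))) = x * (y * (y * (x * (s * (y * (t * x)))))) := by
    have := h2 x y (s * (y * t))
    simpa [mul_assoc] using this
  calc x * y * s * y * t * x = x * (y * (s * (y * (t * x)))) := by simp [mul_assoc]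
    _ = x * (y * (y * (s * (y * (t * x))))) := congrArg (x * ·) e1
    _ = x * (y * (y * (x * (s * (y * (t * x)))))) := e3
    _ = x * (y * (x * (s * (y * (t * x))))) := (congrArg (x * ·) e2).symm
    _ = x * y * x * s * y * t * x := by simp [mul_assoc]
end

section
/- Any monoid satisfying the identities xtx ≈ xtx², xy²tx ≈ (xy)²tx, and (xy)² ≈ (yx)² also satisfies xy²tx ≈ xy²xtx. -/
/-- Any monoid satisfying `xtx ≈ xtx²`, `xy²tx ≈ (xy)²tx` and `(xy)² ≈ (yx)²`
also satisfies `xy²tx ≈ xy²xtx`. -/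
theorem stmt_8 {M : Type*} [Monoid M]
    (h1 : ∀ x t : M, x * t * x = x * t * (x * x))
    (h2 : ∀ x y t : M, x * (y * y) * t * x = (x * y) * (x * y) * t * x)
    (h3 : ∀ x y : M, (x * y) * (x * y) = (y * x) * (y * x)) :
    ∀ x y t : M, x * (y * y) * t * x = x * (y * y) * x * t * x := by
  intro x y t
  have H1t : ∀ s : M, x * (y * (x * s)) = x * (y * (x * (x * s))) := fun s => by
    simpa [mul_assoc] using congrArg (· * s) (h1 x y)
  have H3t : ∀ s : M, x * (y * (x * (y * s))) = y * (x * (y * (x * s))) := fun s => by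
    simpa [mul_assoc] using congrArg (· * s) (h3 x y)
  have H2a : x * (y * (y * (t * x))) = x * (y * (x * (y * (t * x)))) := by
    simpa [mul_assoc] using h2 x y t
  have H2b : x * (y * (y * (x * (t * x)))) = x * (y * (x * (y * (x * (t * x))))) := by
    simpa [mul_assoc] using h2 x y (x * t)
  simp only [mul_assoc]
  rw [H2a, H3t (t * x), H1t (t * x), ← H3t (x * (t * x)), ← H2b]
end

section
/- Let M be a monoid satisfying xtx ≈ xtx² and the identity xty²x ≈ xty²xyx for all x,t,y, and also xtyxy ≈ xt(xy)². Then M satisfies xsytyx ≈ xsytxyx. -/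
/-- Any monoid satisfying `xtx ≈ xtx²`, `xty²x ≈ xty²xyx` and `xtyxy ≈ xt(xy)²`
also satisfies `xsytyx ≈ xsytxyx`. -/
theorem stmt_9 {M : Type*} [Monoid M]
    (h1 : ∀ x t : M, x * t * x = x * t * (x * x))
    (h2 : ∀ x t y : M, x * t * (y * y) * x = x * t * (y * y) * x * y * x)
    (h3 : ∀ x t y : M, x * t * y * x * y = x * t * ((x * y) * (x * y))) :
    ∀ x s y t : M, x * s * y * t * y * x = x * s * y * t * x * y * x := by
  intro x s y t
  have e1 := congrArg (fun z => x * s * z * x) (h1 y t)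
  have e2 := h2 x (s * y * t) y
  have e3 := congrArg (fun z => x * s * z * x * y * x) (h1 y t).symm
  have e4 := congrArg (fun z => x * s * z) (h3 y t x).symm
  simp only [← mul_assoc] at e1 e2 e3 e4
  exact e1.trans (e2.trans (e3.trans e4))
end

section
/- The set of identities {xtxs ≈ xtxsx, (xy)² ≈ (yx)²} and the set {xtx ≈ xtx², x²t ≈ x²tx, x²y² ≈ y²x²} define the same variety of monoids; i.e., a monoid satisfies the first set if and only if it satisfies the second set. -/
/-- The identity systems `{xtxs ≈ xtxsx, (xy)² ≈ (yx)²}` and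
`{xtx ≈ xtx², x²t ≈ x²tx, x²y² ≈ y²x²}` define the same variety of monoids. -/
theorem stmt_10 {M : Type*} [Monoid M] :
    ((∀ x t s : M, x * t * x * s = x * t * x * s * x) ∧
      (∀ x y : M, (x * y) * (x * y) = (y * x) * (y * x)))
    ↔ ((∀ x t : M, x * t * x = x * t * (x * x)) ∧
      (∀ x t : M, x * x * t = x * x * t * x) ∧
      (∀ x y : M, x * x * (y * y) = y * y * (x * x))) := by
  constructor
  · rintro ⟨A, B⟩
    refine ⟨fun x t => by simpa [mul_assoc] using A x t 1,
            fun x t => by simpa using A x 1 t, fun x y => ?_⟩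
    -- squares: a² is idempotent
    have sq : ∀ a : M, a * a * (a * a) = a * a := by
      intro a
      have h3 : a * a * a = a * a := by simpa using (A a 1 1).symm
      rw [← mul_assoc, h3, h3]
    -- e t = e t e for e = a²
    have abs : ∀ a t : M, a * a * t = a * a * t * (a * a) := by
      intro a t
      have h1 : a * (a * t) = a * (a * (t * a)) := by
        simpa [mul_assoc] using A a 1 t
      have h2 : a * (a * (t * a)) = a * (a * (t * (a * a))) := by
        simpa [mul_assoc] using A a 1 (t * a)
      simp only [mul_assoc]
      rw [h1, h2]
    -- ef is idempotent
    have idem : ∀ a b : M, (a*a*(b*b)) * (a*a*(b*b)) = a*a*(b*b) := by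
      intro a b
      calc (a*a*(b*b)) * (a*a*(b*b)) = (a*a*(b*b)*(a*a))*(b*b) := by
            simp only [mul_assoc]
        _ = (a*a*(b*b))*(b*b) := by rw [← abs a (b*b)]
        _ = a*a*((b*b)*(b*b)) := by rw [mul_assoc]
        _ = a*a*(b*b) := by rw [sq b]
    calc x*x*(y*y) = (x*x*(y*y))*(x*x*(y*y)) := (idem x y).symm
      _ = (y*y*(x*x))*(y*y*(x*x)) := B (x*x) (y*y)
      _ = y*y*(x*x) := idem y x
  · rintro ⟨C1, C2, C3⟩
    constructor
    · intro x t s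
      have h1 : x*(t*(x*s)) = x*(t*(x*(x*s))) := by
        simpa [mul_assoc] using congrArg (· * s) (C1 x t)
      have h2 : x*(t*(x*(x*s))) = x*(t*(x*(x*(s*x)))) := by
        simpa [mul_assoc] using congrArg (fun u => x*t*u) (C2 x s)
      have h3 : x*(t*(x*(s*x))) = x*(t*(x*(x*(s*x)))) := by
        simpa [mul_assoc] using congrArg (· * (s*x)) (C1 x t)
      simp only [mul_assoc]
      rw [h1, h2, ← h3]
    · intro x y
      have key : ∀ a b : M, (a*b)*(a*b) = a*a*(b*b) := by
        intro a b
        have s1 : a*(b*(a*b)) = a*(b*(a*(b*b))) := by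
          simpa [mul_assoc] using congrArg (a * ·) (C1 b a)
        have s2 : a*(b*(a*(b*b))) = a*(b*(a*(a*(b*b)))) := by
          simpa [mul_assoc] using congrArg (· * (b*b)) (C1 a b)
        have s3 : a*(b*(a*(a*(b*b)))) = a*(b*(b*(b*(a*a)))) := by
          simpa [mul_assoc] using congrArg (fun u => a*b*u) (C3 a b)
        have hb : b*(b*b) = b*b := by simpa [mul_assoc] using (C1 b 1).symm
        have s4 : a*(b*(b*(b*(a*a)))) = a*(b*(b*(a*a))) := by
          simpa [mul_assoc] using congrArg (fun u => a*(u*(a*a))) hb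
        have s5 : a*(b*(b*(a*a))) = a*(a*(a*(b*b))) := by
          simpa [mul_assoc] using congrArg (a * ·) (C3 b a)
        have ha : a*(a*a) = a*a := by simpa [mul_assoc] using (C1 a 1).symm
        have s6 : a*(a*(a*(b*b))) = a*(a*(b*b)) := by
          simpa [mul_assoc] using congrArg (fun u => u*(b*b)) ha
        simp only [mul_assoc]
        rw [s1, s2, s3, s4, s5, s6]
      rw [key x y, key y x, C3]
end

section
/- Let M be a J-trivial monoid satisfying x^n = x^{n+1} for n = 2 (i.e., x² = x³ for all x), and suppose M satisfies xtx ≈ xtx² and xy²tx ≈ (xy)²tx. Then M satisfies xy²tx ≈ xy²xtx. -/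
/-- A `J`-trivial monoid satisfying `x² = x³`, `xtx ≈ xtx²` and
`xy²tx ≈ (xy)²tx` also satisfies `xy²tx ≈ xy²xtx`. -/
theorem stmt_11 {M : Type*} [Monoid M]
    (hJ : ∀ a b : M,
      {z : M | ∃ u v : M, u * a * v = z} = {z : M | ∃ u v : M, u * b * v = z} → a = b)
    (hpow : ∀ x : M, x ^ 2 = x ^ 3)
    (h1 : ∀ x t : M, x * t * x = x * t * (x * x))
    (h2 : ∀ x y t : M, x * (y * y) * t * x = (x * y) * (x * y) * t * x) :
    ∀ x y t : M, x * (y * y) * t * x = x * (y * y) * x * t * x := by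
  have hp : ∀ x : M, x * x = x * x * x := by
    intro x
    have := hpow x
    simpa [pow_succ, pow_two, mul_assoc] using this
  -- swap lemma: (ab)² = (ba)²
  have h3 : ∀ a b : M, a * ((b * a) * (b * a)) * b = (a * b) * (a * b) := by
    intro a b
    calc a * ((b * a) * (b * a)) * b = ((a * b) * (a * b)) * (a * b) := by
          simp [mul_assoc]
      _ = (a * b) * (a * b) := (hp ((a * b))).symm
  have swap : ∀ a b : M, (a * b) * (a * b) = (b * a) * (b * a) := by
    intro a b
    apply hJ
    ext z
    simp only [Set.mem_setOf_eq]
    constructor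
    · rintro ⟨u, v, rfl⟩
      refine ⟨u * a, b * v, ?_⟩
      rw [← h3 a b]
      simp [mul_assoc]
    · rintro ⟨u, v, rfl⟩
      refine ⟨u * b, a * v, ?_⟩
      rw [← h3 b a]
      simp [mul_assoc]
  intro x y t
  rw [h2]
  have hr : x * (y * y) * x * t * x = (x * y) * (x * y) * x * t * x := by
    have := h2 x y (x * t)
    calc x * (y * y) * x * t * x = x * (y * y) * (x * t) * x := by simp [mul_assoc]
      _ = (x * y) * (x * y) * (x * t) * x := this
      _ = (x * y) * (x * y) * x * t * x := by simp [mul_assoc]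
  rw [hr]
  conv_lhs => rw [swap x y]
  -- goal: (y*x)*(y*x)*t*x = (x*y)*(x*y)*x*t*x
  have k1 : (y * x) * (y * x) * t * x = y * ((x * y) * (x * y) * x * t * x) := by
    calc (y * x) * (y * x) * t * x = ((y * x) * (y * x) * (y * x)) * t * x := by
          rw [← hp (y * x)]
      _ = y * ((x * y) * (x * y) * x * t * x) := by simp [mul_assoc]
  have k2 : (x * y) * (x * y) * x * t * x = x * ((y * x) * (y * x) * t * x) := by
    simp [mul_assoc]
  apply hJ
  ext z
  simp only [Set.mem_setOf_eq]
  constructor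
  · rintro ⟨u, v, rfl⟩
    refine ⟨u * y, v, ?_⟩
    rw [k1]
    simp [mul_assoc]
  · rintro ⟨u, v, rfl⟩
    refine ⟨u * x, v, ?_⟩
    rw [k2]
    simp [mul_assoc]
end

section
/- In the free monoid on an alphabet A, define a word w to be an isoterm for a monoid M if M violates every nontrivial identity w ≈ w'. If the word xy (product of two distinct letters) is an isoterm for M, then every identity u ≈ v satisfied by M has the same set of multiple letters on both sides (mul(u) = mul(v)) and the restriction of u to its simple letters equals the restriction of v to its simple letters (u(simp(u)) = v(simp(v))). -/
/-!
Sending one letter `a` to `m` and every other letter to `1` turns an identity `u ≈ v` of `M`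
into `m ^ occ_a(u) = m ^ occ_a(v)`. If these exponents differ and one of them is at most `1`,
then `M` satisfies `m ^ n = m` for some `n ≠ 1`, hence the nontrivial identity `xy ≈ xyⁿ`.
So simple and multiple letters agree on both sides. Deleting all multiple letters leaves an
identity between two linear words with the same content; if they differed, the first letters
at which they disagree would occur in opposite orders, and deleting everything else would give
`ab ≈ ba`, i.e. `xy ≈ yx` after renaming.
-/

open List

def SatisfiesIdentity (M : Type*) [Monoid M] {α : Type*} (u v : List α) : Prop :=
  ∀ f : α → M, (u.map f).prod = (v.map f).prod

def IsIsoterm (M : Type*) [Monoid M] {α : Type*} (w : List α) : Prop :=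
  ∀ w', SatisfiesIdentity M w w' → w' = w

section

variable {M : Type*} [Monoid M] {α β : Type*}

theorem List.prod_map_ite_one (P : α → Bool) (f : α → M) (l : List α) :
    (l.map fun a => if P a then f a else 1).prod = ((l.filter P).map f).prod := by
  induction l with
  | nil => rfl
  | cons a l ih => by_cases h : P a <;> simp [h, ih]

theorem List.mem_filter_count_eq_one [DecidableEq α] {l : List α} {a : α} :
    a ∈ l.filter (fun b => l.count b = 1) ↔ l.count a = 1 := by
  rw [mem_filter, decide_eq_true_iff, and_iff_right_iff_imp]
  intro h
  exact count_pos_iff.mp (by omega)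

theorem List.nodup_filter_count_eq_one [DecidableEq α] (l : List α) :
    (l.filter fun b => l.count b = 1).Nodup := by
  refine nodup_iff_count_le_one.mpr fun a => ?_
  by_cases h : l.count a = 1
  · exact (count_filter (by simpa using h)).trans_le h.le
  · exact (count_eq_zero.mpr (mem_filter_count_eq_one.not.mpr h)).trans_le zero_le_one

theorem List.filter_mem_pair_cons [DecidableEq α] {c d : α} {l : List α} (hl : (c :: l).Nodup)
    (hd : d ∈ l) : (c :: l).filter (· ∈ ({c, d} : Finset α)) = [c, d] := by
  have hc : c ∉ l := (nodup_cons.mp hl).1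
  have hfilter : l.filter (· ∈ ({c, d} : Finset α)) = l.filter (· = d) :=
    filter_congr fun e he => by
      have : e ≠ c := fun h => hc (h ▸ he)
      simp [this]
  rw [filter_cons_of_pos (by simp), hfilter, filter_eq, count_eq_one_of_mem hl.of_cons hd]
  rfl

namespace SatisfiesIdentity

variable {u v : List α}

theorem filter (h : SatisfiesIdentity M u v) (P : α → Bool) :
    SatisfiesIdentity M (u.filter P) (v.filter P) := fun f => by
  simpa only [prod_map_ite_one] using h fun a => if P a then f a else 1

theorem map (h : SatisfiesIdentity M u v) (σ : α → β) :
    SatisfiesIdentity M (u.map σ) (v.map σ) := fun f => by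
  simpa only [map_map] using h (f ∘ σ)

theorem pow_count_eq [DecidableEq α] (h : SatisfiesIdentity M u v) (a : α) (m : M) :
    m ^ u.count a = m ^ v.count a := by
  simpa [filter_beq, prod_replicate] using h.filter (· == a) fun _ => m

end SatisfiesIdentity

theorem pow_add_one_sub_eq_self {k j : ℕ} (h : ∀ m : M, m ^ k = m ^ j) (hj : j ≤ 1) (m : M) :
    m ^ (k + (1 - j)) = m := by
  rw [pow_add, h, ← pow_add, Nat.add_sub_cancel' hj, pow_one]

namespace IsIsoterm

variable {x y : α}

theorem eq_one_of_pow_eq_self (hiso : IsIsoterm M [x, y]) {n : ℕ} (h : ∀ m : M, m ^ n = m) :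
    n = 1 := by
  have : x :: replicate n y = [x, y] := hiso _ fun f => by simp [prod_replicate, h]
  simpa using congrArg length this

theorem eq_of_pow_eq_pow (hiso : IsIsoterm M [x, y]) {k j : ℕ} (h : ∀ m : M, m ^ k = m ^ j)
    (hj : j ≤ 1) : k = j := by
  have := hiso.eq_one_of_pow_eq_self (pow_add_one_sub_eq_self h hj)
  omega

theorem count_eq [DecidableEq β] (hiso : IsIsoterm M [x, y]) {u v : List β}
    (huv : SatisfiesIdentity M u v) (a : β) (ha : u.count a ≤ 1 ∨ v.count a ≤ 1) :
    u.count a = v.count a := by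
  rcases ha with ha | ha
  · exact (hiso.eq_of_pow_eq_pow (fun m => (huv.pow_count_eq a m).symm) ha).symm
  · exact hiso.eq_of_pow_eq_pow (huv.pow_count_eq a) ha

theorem not_satisfiesIdentity_swap [DecidableEq β] (hiso : IsIsoterm M [x, y]) (hxy : x ≠ y)
    {c d : β} (hcd : c ≠ d) : ¬ SatisfiesIdentity M [c, d] [d, c] := fun h => by
  have h' := h.map fun e => if e = c then x else y
  simp only [map_cons, map_nil, if_pos, if_neg (Ne.symm hcd)] at h'
  have := hiso _ h'
  simp only [cons.injEq, and_true] at this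
  exact hxy this.2

theorem eq_of_nodup [DecidableEq β] (hiso : IsIsoterm M [x, y]) (hxy : x ≠ y) {p q : List β}
    (hp : p.Nodup) (hq : q.Nodup) (hpq : p ~ q) (h : SatisfiesIdentity M p q) : p = q := by
  induction p generalizing q with
  | nil => exact hpq.nil_eq
  | cons c p ih =>
    cases q with
    | nil => exact absurd (perm_nil.mp hpq) (cons_ne_nil c p)
    | cons d q =>
      by_cases hcd : c = d
      · subst hcd
        have drop_head : ∀ {l : List β}, (c :: l).Nodup → (c :: l).filter (· != c) = l :=
          fun hl => (hl.erase_eq_filter c).symm.trans (erase_cons_head c _)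
        have h' := h.filter (· != c)
        rw [drop_head hp, drop_head hq] at h'
        rw [ih hp.of_cons hq.of_cons hpq.cons_inv h']
      · have hd : d ∈ p :=
          (mem_cons.mp (hpq.mem_iff.mpr mem_cons_self)).resolve_left (Ne.symm hcd)
        have hc : c ∈ q := (mem_cons.mp (hpq.mem_iff.mp mem_cons_self)).resolve_left hcd
        have h' := h.filter (· ∈ ({c, d} : Finset β))
        rw [filter_mem_pair_cons hp hd, Finset.pair_comm, filter_mem_pair_cons hq hc] at h'
        exact absurd h' (hiso.not_satisfiesIdentity_swap hxy hcd)

end IsIsoterm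

end

/-- If the word `xy` (the product of two distinct letters) is an isoterm for a
monoid `M`, then every identity `u ≈ v` of `M` has the same multiple letters on
both sides and the same restriction to simple letters. Words over the countably
infinite alphabet `ℕ` are modelled as `List ℕ`, and an identity `u ≈ v` holds
in `M` if every substitution `f : ℕ → M` gives `(u.map f).prod = (v.map f).prod`. -/
theorem stmt_13 {M : Type*} [Monoid M] (x y : ℕ) (hxy : x ≠ y)
    (hiso : ∀ w' : List ℕ, w' ≠ [x, y] →
      ¬ ∀ f : ℕ → M, (([x, y]).map f).prod = (w'.map f).prod) :
    ∀ u v : List ℕ, (∀ f : ℕ → M, (u.map f).prod = (v.map f).prod) →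
      (∀ a : ℕ, 2 ≤ u.count a ↔ 2 ≤ v.count a) ∧
      u.filter (fun a => u.count a = 1) = v.filter (fun a => v.count a = 1) := by
  intro u v (huv : SatisfiesIdentity M u v)
  have hisoterm : IsIsoterm M [x, y] := fun w' h => by_contra fun hne => hiso w' hne h
  have hcount := hisoterm.count_eq huv
  have hsimple : ∀ a, u.count a = 1 ↔ v.count a = 1 := fun a => by have := hcount a; omega
  refine ⟨fun a => by have := hcount a; omega, ?_⟩
  have hfilter : v.filter (fun a => v.count a = 1) = v.filter (fun a => u.count a = 1) :=
    filter_congr fun a _ => by simp [hsimple]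
  refine hisoterm.eq_of_nodup hxy (nodup_filter_count_eq_one u) (nodup_filter_count_eq_one v) ?_ ?_
  · exact (perm_ext_iff_of_nodup (nodup_filter_count_eq_one u) (nodup_filter_count_eq_one v)).mpr
      fun a => by rw [mem_filter_count_eq_one, mem_filter_count_eq_one, hsimple]
  · exact hfilter ▸ huv.filter _
end

section
/- Let M be a J-trivial monoid satisfying x^n = x^{n+1} for some n ≥ 1, and suppose M satisfies an identity of the form x^p y^k ≈ w where p,k ≥ 1 and the word w over letters {x,y} contains yx as a subword. Then all idempotents of M commute: for all idempotents e, f of M, ef = fe. -/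
/-- Let `M` be a `J`-trivial monoid satisfying `x^n = x^(n+1)` for some `n ≥ 1`,
and suppose `M` satisfies an identity `x^p y^k ≈ w` with `p, k ≥ 1`, where the
word `w` over the letters `{x, y}` (encoded as `List Bool`, `false ↦ x`,
`true ↦ y`) contains `yx` as a subword. Then all idempotents of `M` commute. -/
theorem stmt_17 {M : Type*} [Monoid M] (n p k : ℕ) (hn : 1 ≤ n) (hp : 1 ≤ p) (hk : 1 ≤ k)
    (hJ : ∀ a b : M,
      {z : M | ∃ u v : M, u * a * v = z} = {z : M | ∃ u v : M, u * b * v = z} → a = b)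
    (hpow : ∀ x : M, x ^ n = x ^ (n + 1))
    (w : List Bool) (hw : [true, false] <:+: w)
    (hid : ∀ a b : M, a ^ p * b ^ k = (w.map (fun i => if i then b else a)).prod) :
    ∀ e f : M, e * e = e → f * f = f → e * f = f * e := by
  intro e f he hf
  have hidem : ∀ (x : M), x * x = x → ∀ m : ℕ, 1 ≤ m → x ^ m = x := by
    intro x hx m hm
    induction m with
    | zero => omega
    | succ m ih =>
      rcases Nat.lt_or_ge 1 (m + 1) with h | h
      · have hm1 : 1 ≤ m := by omega
        rw [pow_succ, ih hm1, hx]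
      · have : m = 0 := by omega
        simp [this]
  obtain ⟨s, t, hst⟩ := hw
  have key : ∀ a b : M, a * a = a → b * b = b → ∃ u v : M, u * (b * a) * v = a * b := by
    intro a b ha hb
    have h := hid a b
    rw [hidem a ha p hp, hidem b hb k hk, ← hst] at h
    refine ⟨(s.map (fun i => if i then b else a)).prod,
      (t.map (fun i => if i then b else a)).prod, ?_⟩
    simp only [List.map_append, List.prod_append, List.map_cons, List.map_nil,
      List.prod_cons, List.prod_nil, if_true, if_false] at h ⊢
    rw [h]
    simp [mul_assoc]
  obtain ⟨u₁, v₁, h1⟩ := key e f he hf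
  obtain ⟨u₂, v₂, h2⟩ := key f e hf he
  apply hJ
  ext z
  simp only [Set.mem_setOf_eq]
  constructor
  · rintro ⟨u, v, rfl⟩
    exact ⟨u * u₁, v₁ * v, by rw [← h1]; simp [mul_assoc]⟩
  · rintro ⟨u, v, rfl⟩
    exact ⟨u * u₂, v₂ * v, by rw [← h2]; simp [mul_assoc]⟩
end

section
/- Any monoid satisfying the identities xtx ≈ x²tx and xzxtxsx ≈ xzxtsx also satisfies xtsx ≈ xtxsx. -/
/-- Any monoid satisfying `xtx ≈ x²tx` and `xzxtxsx ≈ xzxtsx` also satisfies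
`xtsx ≈ xtxsx`. -/
theorem stmt_19 {M : Type*} [Monoid M]
    (h1 : ∀ x t : M, x * t * x = x * x * t * x)
    (h2 : ∀ x z t s : M, x * z * x * t * x * s * x = x * z * x * t * s * x) :
    ∀ x t s : M, x * t * s * x = x * t * x * s * x := by
  intro x t s
  have e1 := h1 x (t * s)
  have e2 := h2 x 1 t s
  have e3 := h1 x (t * x * s)
  simp only [mul_one, mul_assoc] at *
  rw [e1, ← e2, ← e3]
end
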